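/- Let G be a finite graph on N vertices with ζ-edge-expansion for some ζ > 0, i.e., every vertex subset S with |S| ≤ N/2 satisfies |E(S, Sᶜ)| ≥ ζ|S|. Let π be the Ising measure at inverse temperature β on G. Then for every 0 < ε < 1, the probability under π that the magnetization M(σ) = Σ_v σ_v lies in [−εN, εN] is at most 2^{N+1} · exp(−βζ(1−ε)N/2). In particular, for β > (2 log 2 + 1)·2/(ζ(1−ε)), this probability is at most e^{−N}. -/

import Mathlib

/-!
A configuration with `|M(σ)| ≤ εN` has a spin class `S` with `(1 - ε)N/2 ≤ |S| ≤ N/2`. The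
bichromatic edges of `σ` are exactly the edges leaving `S`, so expansion gives
`|C(σ)| ≥ ζ(1 - ε)N/2`. Since the all-plus configuration has weight `1`, the partition
function is at least `1`, hence each such `σ` has probability at most `exp(−βζ(1 - ε)N/2)`;
a union bound over the `2^N` configurations finishes the proof.
-/

variable {V : Type*} [Fintype V] [DecidableEq V]

/-- Whether the two endpoints of an (unordered) edge receive different spins. -/
def edgeBichromatic (σ : V → Bool) : Sym2 V → Bool :=
  Sym2.lift ⟨fun u v => σ u != σ v, fun u v => by cases hu : σ u <;> cases hv : σ v <;> simp [hu, hv]⟩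

/-- `|C(σ)|`: the number of edges of `G` whose endpoints receive different spins. -/
def cutCount (G : SimpleGraph V) [DecidableRel G.Adj] (σ : V → Bool) : ℕ :=
  (G.edgeFinset.filter (fun e => edgeBichromatic σ e = true)).card

/-- The Ising Gibbs measure `π(σ) = exp(−β|C(σ)|)/Z`. -/
noncomputable def isingMeasure (G : SimpleGraph V) [DecidableRel G.Adj] (β : ℝ)
    (σ : V → Bool) : ℝ :=
  Real.exp (-β * (cutCount G σ : ℝ)) / ∑ σ' : V → Bool, Real.exp (-β * (cutCount G σ' : ℝ))

/-- The magnetization `M(σ) = Σ_v σ_v` with spins `±1`. -/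
def magnetization (σ : V → Bool) : ℤ := ∑ v : V, (if σ v then (1 : ℤ) else -1)

/-- `|E(S,Sᶜ)|`: the number of edges of `G` with exactly one endpoint in `S`
(counted once, oriented from `S` outwards). -/
def edgeBoundaryCard (G : SimpleGraph V) [DecidableRel G.Adj] (S : Finset V) : ℕ :=
  (Finset.univ.filter (fun p : V × V => G.Adj p.1 p.2 ∧ p.1 ∈ S ∧ p.2 ∉ S)).card

open Finset

section

variable {V : Type*} [Fintype V]

def spinClass (σ : V → Bool) (b : Bool) : Finset V := univ.filter (σ · = b)

theorem card_spinClass_true_add_card_spinClass_false (σ : V → Bool) :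
    #(spinClass σ true) + #(spinClass σ false) = Fintype.card V := by
  simpa only [spinClass, Bool.not_eq_true, card_univ] using
    card_filter_add_card_filter_not (s := univ) (fun v => σ v = true)

theorem magnetization_eq_card_spinClass_sub (σ : V → Bool) :
    magnetization σ = (#(spinClass σ true) : ℤ) - #(spinClass σ false) := by
  rw [magnetization, sum_ite, sum_const, sum_const]
  simp only [spinClass, Bool.not_eq_true]
  ring

theorem exists_two_mul_card_spinClass_eq (σ : V → Bool) :
    ∃ b, 2 * (#(spinClass σ b) : ℝ) = Fintype.card V - |(magnetization σ : ℝ)| := by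
  have hsum : (#(spinClass σ true) : ℝ) + #(spinClass σ false) = Fintype.card V := by
    exact_mod_cast card_spinClass_true_add_card_spinClass_false σ
  have hM : (magnetization σ : ℝ) = #(spinClass σ true) - #(spinClass σ false) := by
    exact_mod_cast magnetization_eq_card_spinClass_sub σ
  rcases le_total (magnetization σ : ℝ) 0 with h | h
  · exact ⟨true, by rw [abs_of_nonpos h]; linarith⟩
  · exact ⟨false, by rw [abs_of_nonneg h]; linarith⟩

theorem cutCount_const (G : SimpleGraph V) [DecidableRel G.Adj] (b : Bool) :
    cutCount G (fun _ => b) = 0 := by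
  rw [cutCount, card_eq_zero, filter_eq_empty_iff]
  intro e _
  induction e using Sym2.ind with
  | _ u v => simp [edgeBichromatic]

end

theorem isingMeasure_le_exp (G : SimpleGraph V) [DecidableRel G.Adj] (β : ℝ) (σ : V → Bool) :
    isingMeasure G β σ ≤ Real.exp (-β * cutCount G σ) := by
  have hZ : 1 ≤ ∑ σ' : V → Bool, Real.exp (-β * cutCount G σ') := by
    simpa [cutCount_const] using single_le_sum
      (fun σ' _ => (Real.exp_pos (-β * cutCount G σ')).le) (mem_univ fun _ : V => true)
  exact div_le_self (Real.exp_pos _).le hZ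

theorem sum_isingMeasure_le_of_le_cutCount (G : SimpleGraph V) [DecidableRel G.Adj] {β : ℝ}
    (hβ : 0 ≤ β) (s : Finset (V → Bool)) {c : ℝ} (hc : ∀ σ ∈ s, c ≤ cutCount G σ) :
    ∑ σ ∈ s, isingMeasure G β σ ≤ 2 ^ Fintype.card V * Real.exp (-β * c) := by
  have hs : (#s : ℝ) ≤ 2 ^ Fintype.card V := by
    exact_mod_cast (card_le_univ s).trans_eq (by simp)
  calc ∑ σ ∈ s, isingMeasure G β σ ≤ #s * Real.exp (-β * c) := by
        rw [← nsmul_eq_mul]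
        refine sum_le_card_nsmul s _ _ fun σ hσ => (isingMeasure_le_exp G β σ).trans ?_
        exact Real.exp_le_exp.2 (by nlinarith [hc σ hσ])
    _ ≤ 2 ^ Fintype.card V * Real.exp (-β * c) := by gcongr

def HasEdgeExpansion (G : SimpleGraph V) [DecidableRel G.Adj] (ζ : ℝ) : Prop :=
  ∀ S : Finset V, (#S : ℝ) ≤ Fintype.card V / 2 → ζ * #S ≤ edgeBoundaryCard G S

theorem cutCount_eq_edgeBoundaryCard_spinClass (G : SimpleGraph V) [DecidableRel G.Adj]
    (σ : V → Bool) (b : Bool) : cutCount G σ = edgeBoundaryCard G (spinClass σ b) := by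
  symm
  refine card_bij (fun p _ => s(p.1, p.2)) ?_ ?_ ?_
  · rintro ⟨u, v⟩ hp
    simp only [spinClass, mem_filter, mem_univ, true_and] at hp ⊢
    obtain ⟨hadj, hu, hv⟩ := hp
    refine ⟨SimpleGraph.mem_edgeFinset.2 hadj, ?_⟩
    simp only [edgeBichromatic, Sym2.lift_mk, bne_iff_ne, ne_eq]
    rintro huv
    exact hv (huv ▸ hu)
  · rintro ⟨u, v⟩ hp ⟨u', v'⟩ hp' h
    simp only [spinClass, mem_filter, mem_univ, true_and] at hp hp'
    rcases Sym2.mk_eq_mk_iff.1 h with h | h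
    · exact h
    · obtain ⟨rfl, rfl⟩ := Prod.ext_iff.1 h
      exact absurd hp.2.1 hp'.2.2
  · intro e he
    obtain ⟨he, hbi⟩ := mem_filter.1 he
    induction e using Sym2.ind with
    | _ u v =>
      have hadj := SimpleGraph.mem_edgeFinset.1 he
      have huv : σ u ≠ σ v := by simpa [edgeBichromatic] using hbi
      simp only [spinClass, mem_filter, mem_univ, true_and]
      by_cases hu : σ u = b
      · exact ⟨(u, v), ⟨hadj, hu, fun hv => huv (hu.trans hv.symm)⟩, rfl⟩
      · have hv : σ v = b := by cases b <;> simp_all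
        exact ⟨(v, u), ⟨hadj.symm, hv, fun hu' => huv (hu'.trans hv.symm)⟩, Sym2.eq_swap⟩

theorem mul_card_sub_abs_magnetization_le_cutCount {G : SimpleGraph V} [DecidableRel G.Adj]
    {ζ : ℝ} (hG : HasEdgeExpansion G ζ) (σ : V → Bool) :
    ζ * ((Fintype.card V - |(magnetization σ : ℝ)|) / 2) ≤ cutCount G σ := by
  obtain ⟨b, hb⟩ := exists_two_mul_card_spinClass_eq σ
  have hsmall : (#(spinClass σ b) : ℝ) ≤ Fintype.card V / 2 := by
    linarith [abs_nonneg (magnetization σ : ℝ)]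
  calc ζ * ((Fintype.card V - |(magnetization σ : ℝ)|) / 2)
      = ζ * #(spinClass σ b) := by rw [← hb]; ring
    _ ≤ edgeBoundaryCard G (spinClass σ b) := hG _ hsmall
    _ = cutCount G σ := by rw [cutCount_eq_edgeBoundaryCard_spinClass G σ b]

theorem two_pow_mul_exp_le_exp_neg (N : ℕ) {a : ℝ} (ha : 2 * (Real.log 2 + 1) ≤ a) :
    2 ^ N * Real.exp (-a * N / 2) ≤ Real.exp (-N) := by
  rw [← Real.exp_log (by norm_num : (0 : ℝ) < 2), ← Real.exp_nat_mul, ← Real.exp_add,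
    Real.exp_log (by norm_num : (0 : ℝ) < 2)]
  exact Real.exp_le_exp.2 (by nlinarith [(N.cast_nonneg : (0 : ℝ) ≤ N)])

theorem ising_magnetization_bottleneck_general
    (G : SimpleGraph V) [DecidableRel G.Adj] (β ζ ε : ℝ)
    (hζ : 0 < ζ) (hβ : 0 < β) (hε₁ : ε < 1)
    (hexp : ∀ S : Finset V, (S.card : ℝ) ≤ (Fintype.card V : ℝ) / 2 →
      ζ * (S.card : ℝ) ≤ (edgeBoundaryCard G S : ℝ)) :
    (∑ σ ∈ Finset.univ.filter
        (fun σ : V → Bool => |(magnetization σ : ℝ)| ≤ ε * (Fintype.card V : ℝ)),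
      isingMeasure G β σ)
      ≤ 2 ^ (Fintype.card V + 1) *
          Real.exp (-β * ζ * (1 - ε) * (Fintype.card V : ℝ) / 2)
    ∧ (β > (2 * Real.log 2 + 1) * 2 / (ζ * (1 - ε)) →
        (∑ σ ∈ Finset.univ.filter
            (fun σ : V → Bool => |(magnetization σ : ℝ)| ≤ ε * (Fintype.card V : ℝ)),
          isingMeasure G β σ) ≤ Real.exp (-(Fintype.card V : ℝ))) := by
  set N := Fintype.card V
  have hcut : ∀ σ ∈ univ.filter (fun σ : V → Bool => |(magnetization σ : ℝ)| ≤ ε * N),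
      ζ * (1 - ε) * N / 2 ≤ cutCount G σ := fun σ hσ => by
    nlinarith [(mem_filter.1 hσ).2, hζ.le, mul_card_sub_abs_magnetization_le_cutCount hexp σ]
  have hsum := sum_isingMeasure_le_of_le_cutCount G hβ.le _ hcut
  rw [show -β * (ζ * (1 - ε) * N / 2) = -(β * (ζ * (1 - ε))) * N / 2 by ring] at hsum
  refine ⟨hsum.trans ?_, fun hβ' => hsum.trans (two_pow_mul_exp_le_exp_neg N ?_)⟩
  · rw [show -β * ζ * (1 - ε) * N / 2 = -(β * (ζ * (1 - ε))) * N / 2 by ring]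
    gcongr
    · norm_num
    · omega
  · rw [gt_iff_lt, div_lt_iff₀ (by nlinarith)] at hβ'
    linarith [Real.log_nonneg (by norm_num : (1 : ℝ) ≤ 2)]

/-- **Magnetization bottleneck on expanders.** If the `N`-vertex graph `G` has
`ζ`-edge-expansion, then for every `0 < ε < 1` the Ising probability that the
magnetization lies in `[−εN, εN]` is at most `2^{N+1}·exp(−βζ(1−ε)N/2)`; in particular,
for `β > (2 log 2 + 1)·2/(ζ(1−ε))` this probability is at most `e^{−N}`. -/
theorem ising_magnetization_bottleneck
    (G : SimpleGraph V) [DecidableRel G.Adj] (β ζ ε : ℝ)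
    (hζ : 0 < ζ) (hβ : 0 < β) (hε₀ : 0 < ε) (hε₁ : ε < 1)
    (hexp : ∀ S : Finset V, (S.card : ℝ) ≤ (Fintype.card V : ℝ) / 2 →
      ζ * (S.card : ℝ) ≤ (edgeBoundaryCard G S : ℝ)) :
    (∑ σ ∈ Finset.univ.filter
        (fun σ : V → Bool => |(magnetization σ : ℝ)| ≤ ε * (Fintype.card V : ℝ)),
      isingMeasure G β σ)
      ≤ 2 ^ (Fintype.card V + 1) *
          Real.exp (-β * ζ * (1 - ε) * (Fintype.card V : ℝ) / 2)
    ∧ (β > (2 * Real.log 2 + 1) * 2 / (ζ * (1 - ε)) →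
        (∑ σ ∈ Finset.univ.filter
            (fun σ : V → Bool => |(magnetization σ : ℝ)| ≤ ε * (Fintype.card V : ℝ)),
          isingMeasure G β σ) ≤ Real.exp (-(Fintype.card V : ℝ))) :=
  ising_magnetization_bottleneck_general G β ζ ε hζ hβ hε₁ hexp
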